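/- Let n, m ≥ 1 be natural numbers. If real numbers x, y satisfy x^(2n-1) + y^(2n-1) = 0, y = x + 2^(1/(2m)), and x^(2n) + y^(2n) = 1, then 2n·(2m - 1) = 2m; consequently the only solution in natural numbers is n = m = 1. -/

import Mathlib

/-!
Odd powers are injective, so the first equation forces `y = -x`; the second then gives
`x = -c / 2` with `c = 2 ^ (1 / (2m))`, and the third becomes `c ^ (2n) = 2 ^ (2n - 1)`.
Comparing exponents of `2` yields `n / m = 2n - 1`, i.e. `n + m = 2nm`, whose only solution in
positive integers is `n = m = 1`.
-/

lemma eq_neg_of_pow_add_pow_eq_zero {R : Type*} [Ring R] [LinearOrder R] [IsStrictOrderedRing R]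
    {k : ℕ} (hk : Odd k) {a b : R} (h : a ^ k + b ^ k = 0) : b = -a := by
  rw [← hk.pow_inj, hk.neg_pow]
  exact (neg_eq_of_add_eq_zero_right h).symm

lemma rpow_one_div_two_mul_pow_two_mul {a : ℝ} (ha : 0 ≤ a) (m n : ℕ) :
    (a ^ (1 / (2 * (m : ℝ)))) ^ (2 * n) = a ^ ((n : ℝ) / m) := by
  rw [← Real.rpow_natCast, ← Real.rpow_mul ha]
  congr 1
  push_cast
  ring

lemma eq_one_and_eq_one_of_add_eq_two_mul_mul {n m : ℕ} (hn : 1 ≤ n) (hm : 1 ≤ m)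
    (h : n + m = 2 * n * m) : n = 1 ∧ m = 1 := by
  constructor <;> nlinarith

theorem stmt3 (n m : ℕ) (hn : 1 ≤ n) (hm : 1 ≤ m) (x y : ℝ)
    (h1 : x^(2*n-1) + y^(2*n-1) = 0)
    (h2 : y = x + (2:ℝ) ^ (1 / (2 * (m:ℝ))))
    (h3 : x^(2*n) + y^(2*n) = 1) :
    2*n*(2*m - 1) = 2*m ∧ n = 1 ∧ m = 1 := by
  have hyx : y = -x := eq_neg_of_pow_add_pow_eq_zero ⟨n - 1, by omega⟩ h1
  have hx : x = -(2:ℝ) ^ (1 / (2 * (m:ℝ))) / 2 := by linarith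
  have hpow : (2:ℝ) ^ ((n : ℝ) / m) = 2 ^ (2 * (n : ℝ) - 1) := by
    rw [hyx, hx, Even.neg_pow ⟨n, two_mul n⟩, neg_div, Even.neg_pow ⟨n, two_mul n⟩, div_pow,
      rpow_one_div_two_mul_pow_two_mul zero_le_two] at h3
    rw [Real.rpow_sub two_pos, Real.rpow_one, ← Nat.cast_ofNat, ← Nat.cast_mul, Real.rpow_natCast]
    push_cast
    field_simp at h3 ⊢
    linarith
  have hexp : (n : ℝ) + m = 2 * n * m := by
    have hm0 : (m : ℝ) ≠ 0 := by positivity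
    rw [Real.rpow_right_inj two_pos one_lt_two.ne'] at hpow
    field_simp at hpow
    linarith
  obtain ⟨rfl, rfl⟩ := eq_one_and_eq_one_of_add_eq_two_mul_mul hn hm (by exact_mod_cast hexp)
  norm_num
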